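/- arXiv:0810.5481 — 2 statements merged into one kernel-verified Lean document; each statement's English description precedes it below -/
import Mathlib

section
/- A topological space X is a Dold space if and only if each of its path components is open in X and is itself a Dold space (in the subspace topology). -/
open unitInterval

universe u v w

/-- A partition of unity: continuous `[0,1]`-valued maps whose pointwise sum is `1`. -/
def IsPartitionOfUnity {ι : Type*} {X : Type*} [TopologicalSpace X]
    (f : ι → X → ℝ) : Prop :=
  (∀ i, Continuous (f i)) ∧ (∀ i x, f i x ∈ Set.Icc (0 : ℝ) 1) ∧
    ∀ x, HasSum (fun i => f i x) 1

/-- A cover is numerable if it admits a subordinate partition of unity with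
locally finite supports. -/
def IsNumerableCover {ι : Type*} {X : Type*} [TopologicalSpace X]
    (U : ι → Set X) : Prop :=
  ∃ f : ι → X → ℝ, IsPartitionOfUnity f ∧
    LocallyFinite (fun i => closure (Function.support (f i))) ∧
    ∀ i, closure (Function.support (f i)) ⊆ U i

/-- `U` is ambiently contractible to `x₀`: the inclusion `U → X` is homotopic to the
constant map at `x₀`. -/
def AmbientlyContractibleTo {X : Type*} [TopologicalSpace X] (U : Set X) (x₀ : X) : Prop :=
  ContinuousMap.Homotopic
    (⟨Subtype.val, continuous_subtype_val⟩ : C(U, X))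
    (ContinuousMap.const ↥U x₀)

/-- `U ⊆ X` is ambiently contractible: the inclusion `U → X` is nullhomotopic. -/
def AmbientlyContractible {X : Type*} [TopologicalSpace X] (U : Set X) : Prop :=
  ∃ x₀ : X, AmbientlyContractibleTo U x₀

/-- A Dold space (numerably contractible space): a space admitting a numerable cover
by ambiently contractible subsets. -/
def IsDoldSpace (X : Type u) [TopologicalSpace X] : Prop :=
  ∃ (ι : Type u) (U : ι → Set X),
    (∀ x, ∃ i, x ∈ U i) ∧ IsNumerableCover U ∧ ∀ i, AmbientlyContractible (U i)

/-!
A null-homotopy of `U ⊆ X` is a family of paths from the points of `U` to the base point, so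
each member of a contractible cover lies in a single path component. A numerable cover is an
open cover in the weak sense that every point has a neighbourhood `{f i > 0}` inside some `U i`;
hence path components of a Dold space are open. Restricting the cover and its partition of unity
to a path component keeps it numerable, and the null-homotopies do not leave the component.
Conversely, open path components are also closed, so partitions of unity on the components
extend by zero to continuous functions on `X`, which form a partition of unity subordinate to
the union of the covers of the components.
-/

open Function Set Topology

section Homotopy

variable {X Y : Type*} [TopologicalSpace X] [TopologicalSpace Y]

theorem ContinuousMap.Homotopy.joined_apply {f₀ f₁ : C(X, Y)} (F : f₀.Homotopy f₁)
    (t : I) (x : X) : Joined (f₀ x) (F (t, x)) := by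
  have : PathConnectedSpace I := isPathConnected_iff_pathConnectedSpace.1 <|
    (convex_Icc (0 : ℝ) 1).isPathConnected (nonempty_Icc.2 zero_le_one)
  rw [← F.apply_zero]
  exact (PathConnectedSpace.joined 0 t).map (f := fun s => F (s, x)) (by fun_prop)

theorem ContinuousMap.Homotopic.of_isEmpty [IsEmpty X] (f g : C(X, Y)) : f.Homotopic g :=
  (ContinuousMap.ext isEmptyElim : f = g) ▸ .refl f

end Homotopy

section AmbientlyContractible

variable {X : Type*} [TopologicalSpace X] {U : Set X} {x₀ : X}

theorem AmbientlyContractibleTo.subset_pathComponent (h : AmbientlyContractibleTo U x₀) :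
    U ⊆ pathComponent x₀ := fun u hu => by
  obtain ⟨H⟩ := h
  have hu := H.joined_apply 1 ⟨u, hu⟩
  rw [H.apply_one] at hu
  exact hu.symm

theorem AmbientlyContractibleTo.preimage_pathComponent (h : AmbientlyContractibleTo U x₀)
    {x : X} (hx₀ : x₀ ∈ pathComponent x) :
    AmbientlyContractibleTo (Subtype.val ⁻¹' U : Set (pathComponent x)) ⟨x₀, hx₀⟩ := by
  obtain ⟨H⟩ := h
  refine ⟨⟨⟨fun p => ⟨H (p.1, ⟨p.2.1.1, p.2.2⟩), ?_⟩, ?_⟩, ?_, ?_⟩⟩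
  · exact p.2.1.2.trans (H.joined_apply p.1 ⟨p.2.1.1, p.2.2⟩)
  · exact (H.continuous.comp (by fun_prop)).subtype_mk _
  · exact fun v => Subtype.ext (H.apply_zero _)
  · exact fun v => Subtype.ext (H.apply_one _)

theorem AmbientlyContractible.preimage_pathComponent (h : AmbientlyContractible U) (x : X) :
    AmbientlyContractible (Subtype.val ⁻¹' U : Set (pathComponent x)) := by
  obtain ⟨x₀, h⟩ := h
  by_cases hx₀ : x₀ ∈ pathComponent x
  · exact ⟨_, h.preimage_pathComponent hx₀⟩
  · have : IsEmpty (Subtype.val ⁻¹' U : Set (pathComponent x)) :=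
      ⟨fun v => hx₀ (v.1.2.trans (h.subset_pathComponent v.2).symm)⟩
    exact ⟨⟨x, mem_pathComponent_self x⟩, .of_isEmpty _ _⟩

theorem AmbientlyContractible.image_val {S : Set X} {V : Set S} (h : AmbientlyContractible V) :
    AmbientlyContractible (Subtype.val '' V : Set X) := by
  obtain ⟨y₀, h⟩ := h
  have hV (z : Subtype.val '' V) : ∃ hz : z.1 ∈ S, ⟨z.1, hz⟩ ∈ V := Subtype.coe_image.subset z.2
  let toV : C(Subtype.val '' V, V) := ⟨fun z => ⟨⟨z, (hV z).fst⟩, (hV z).snd⟩, by fun_prop⟩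
  exact ⟨y₀.1, ((ContinuousMap.Homotopic.refl ⟨Subtype.val, continuous_subtype_val⟩).comp
    h).comp (.refl toV)⟩

end AmbientlyContractible

section NumerableCover

variable {X : Type*} [TopologicalSpace X] {ι : Type*} {U : ι → Set X}

theorem IsPartitionOfUnity.exists_pos {f : ι → X → ℝ} (hf : IsPartitionOfUnity f) (x : X) :
    ∃ i, 0 < f i x := by
  by_contra! h
  have hzero : (fun i => f i x) = 0 := funext fun i => (h i).antisymm (hf.2.1 i x).1
  exact one_ne_zero ((hf.2.2 x).unique (hzero ▸ hasSum_zero))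

theorem IsNumerableCover.exists_mem_nhds (hU : IsNumerableCover U) (x : X) :
    ∃ i, U i ∈ 𝓝 x := by
  obtain ⟨f, hf, -, hsub⟩ := hU
  obtain ⟨i, hi⟩ := hf.exists_pos x
  refine ⟨i, Filter.mem_of_superset ((hf.1 i).isOpen_preimage _ isOpen_Ioi |>.mem_nhds hi) ?_⟩
  exact fun y hy => hsub i (subset_closure (ne_of_gt hy))

theorem IsNumerableCover.preimage {Y : Type*} [TopologicalSpace Y] {g : Y → X}
    (hg : Continuous g) (hU : IsNumerableCover U) : IsNumerableCover fun i => g ⁻¹' U i := by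
  obtain ⟨f, ⟨hcont, hIcc, hsum⟩, hlf, hsub⟩ := hU
  have hcl (i : ι) : closure (support (f i ∘ g)) ⊆ g ⁻¹' closure (support (f i)) := by
    rw [support_comp_eq_preimage]
    exact hg.closure_preimage_subset _
  refine ⟨fun i => f i ∘ g, ⟨fun i => (hcont i).comp hg, fun i y => hIcc i (g y),
    fun y => hsum (g y)⟩, (hlf.preimage_continuous hg).subset hcl, fun i => ?_⟩
  exact (hcl i).trans (preimage_mono (hsub i))

end NumerableCover

section Gluing

variable {X : Type*} [TopologicalSpace X]

theorem IsClopen.continuous_extend_zero {M : Type*} [TopologicalSpace M] [Zero M] {S : Set X}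
    (hS : IsClopen S) {g : S → M} (hg : Continuous g) : Continuous (Subtype.val.extend g 0) := by
  refine continuous_iff_continuousAt.2 fun x => ?_
  by_cases hx : x ∈ S
  · rw [show x = (⟨x, hx⟩ : S) from rfl, ← hS.isOpen.isOpenEmbedding_subtypeVal.continuousAt_iff,
      extend_comp Subtype.val_injective]
    exact hg.continuousAt
  · have hzero : Subtype.val.extend g 0 =ᶠ[𝓝 x] fun _ => 0 :=
      Filter.eventually_of_mem (hS.isClosed.isOpen_compl.mem_nhds hx) fun y hy =>
        extend_apply' _ _ _ fun ⟨a, ha⟩ => hy (ha ▸ a.2)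
    exact continuousAt_const.congr hzero.symm

theorem IsClosed.closure_support_extend_zero {M : Type*} [Zero M] {S : Set X} (hS : IsClosed S)
    (g : S → M) :
    closure (support (Subtype.val.extend g 0)) = Subtype.val '' closure (support g) := by
  rw [support_extend_zero Subtype.val_injective, hS.isClosedEmbedding_subtypeVal.closure_image_eq]

variable {κ : Type*} {π : X → κ} {ι : κ → Type*}

theorem LocallyFinite.sigma_image_val (hπ : IsLocallyConstant π)
    {A : ∀ c, ι c → Set (π ⁻¹' {c})} (hA : ∀ c, LocallyFinite (A c)) :
    LocallyFinite fun p : Σ c, ι c => (Subtype.val '' A p.1 p.2 : Set X) := by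
  intro x
  obtain ⟨N, hN, hfin⟩ := hA (π x) ⟨x, rfl⟩
  refine ⟨Subtype.val '' N,
    (hπ.isOpen_fiber (π x)).isOpenEmbedding_subtypeVal.image_mem_nhds.2 hN, ?_⟩
  refine (hfin.image (Sigma.mk (π x))).subset ?_
  rintro ⟨c, i⟩ ⟨_, ⟨a, ha, rfl⟩, b, hb, hab⟩
  obtain rfl : c = π x := a.2.symm.trans (hab ▸ b.2)
  exact ⟨i, ⟨a, ha, Subtype.ext hab ▸ hb⟩, rfl⟩

theorem IsNumerableCover.sigma_image_val (hπ : IsLocallyConstant π)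
    {V : ∀ c, ι c → Set (π ⁻¹' {c})} (hV : ∀ c, IsNumerableCover (V c)) :
    IsNumerableCover fun p : Σ c, ι c => (Subtype.val '' V p.1 p.2 : Set X) := by
  choose g hg hlf hsub using hV
  have hcl (p : Σ c, ι c) : closure (support (Subtype.val.extend (g p.1 p.2) 0)) =
      Subtype.val '' closure (support (g p.1 p.2)) :=
    (hπ.isClosed_fiber p.1).closure_support_extend_zero _
  refine ⟨fun p => Subtype.val.extend (g p.1 p.2) 0, ⟨fun p =>
    (hπ.isClopen_fiber p.1).continuous_extend_zero ((hg p.1).1 p.2), fun p x => ?_, fun x => ?_⟩,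
    by simpa only [hcl] using LocallyFinite.sigma_image_val hπ hlf,
    fun p => (hcl p).trans_subset (image_mono (hsub p.1 p.2))⟩
  · dsimp only
    rcases em (∃ a : π ⁻¹' {p.1}, a.1 = x) with ⟨a, rfl⟩ | hx
    · rw [Subtype.val_injective.extend_apply]
      exact (hg p.1).2.1 p.2 a
    · rw [extend_apply' _ _ _ hx]
      exact ⟨le_rfl, zero_le_one⟩
  · have hoff : ∀ p ∉ range (Sigma.mk (π x)), Subtype.val.extend (g p.1 p.2) 0 x = 0 := by
      rintro ⟨c, i⟩ hp
      refine extend_apply' _ _ _ ?_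
      rintro ⟨⟨y, hy⟩, rfl⟩
      obtain rfl : π y = c := hy
      exact hp ⟨i, rfl⟩
    have hon (i : ι (π x)) : Subtype.val.extend (g (π x) i) 0 x = g (π x) i ⟨x, rfl⟩ :=
      Subtype.val_injective.extend_apply _ _ (⟨x, rfl⟩ : π ⁻¹' {π x})
    refine (sigma_mk_injective.hasSum_iff hoff).1 ?_
    simpa only [comp_def, hon] using (hg (π x)).2.2 ⟨x, rfl⟩

theorem IsDoldSpace.of_isLocallyConstant {X κ : Type u} [TopologicalSpace X] {π : X → κ}
    (hπ : IsLocallyConstant π) (h : ∀ c, IsDoldSpace (π ⁻¹' {c})) : IsDoldSpace X := by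
  choose ι V hcov hnum hcontr using h
  refine ⟨Σ c, ι c, fun p => Subtype.val '' V p.1 p.2, fun x => ?_,
    .sigma_image_val hπ hnum, fun p => (hcontr p.1 p.2).image_val⟩
  obtain ⟨i, hi⟩ := hcov (π x) ⟨x, rfl⟩
  exact ⟨⟨π x, i⟩, _, hi, rfl⟩

end Gluing

namespace IsDoldSpace

variable {X : Type u} [TopologicalSpace X]

theorem isOpen_pathComponent (hX : IsDoldSpace X) (x : X) : IsOpen (pathComponent x) := by
  obtain ⟨ι, U, -, hnum, hcontr⟩ := hX
  refine isOpen_iff_mem_nhds.2 fun y hy => ?_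
  obtain ⟨i, hi⟩ := hnum.exists_mem_nhds y
  obtain ⟨x₀, hx₀⟩ := hcontr i
  have hU := hx₀.subset_pathComponent
  rw [← pathComponent_congr hy, pathComponent_congr (hU (mem_of_mem_nhds hi))]
  exact Filter.mem_of_superset hi hU

theorem pathComponent (hX : IsDoldSpace X) (x : X) : IsDoldSpace (pathComponent x) := by
  obtain ⟨ι, U, hcov, hnum, hcontr⟩ := hX
  exact ⟨ι, fun i => Subtype.val ⁻¹' U i, fun y => hcov y, hnum.preimage continuous_subtype_val,
    fun i => (hcontr i).preimage_pathComponent x⟩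

end IsDoldSpace

/-- `X` is Dold iff every path component is open and is a Dold space. -/
theorem stmt4 (X : Type u) [TopologicalSpace X] :
    IsDoldSpace X ↔
      ∀ x : X, IsOpen (pathComponent x) ∧ IsDoldSpace (pathComponent x) := by
  refine ⟨fun hX x => ⟨hX.isOpen_pathComponent x, hX.pathComponent x⟩, fun h => ?_⟩
  refine .of_isLocallyConstant (π := ZerothHomotopy.mk) ?_ fun c => ?_
  · refine IsLocallyConstant.iff_isOpen_fiber.2 fun c => ?_
    obtain ⟨x, rfl⟩ := ZerothHomotopy.mk_surjective c
    exact ZerothHomotopy.preimage_singleton_eq_pathComponent x ▸ (h x).1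
  · obtain ⟨x, rfl⟩ := ZerothHomotopy.mk_surjective c
    exact ZerothHomotopy.preimage_singleton_eq_pathComponent x ▸ (h x).2
end

section
/- Let X₀ → X₁ → X₂ → ⋯ be a sequence of continuous maps f_n : X_n → X_{n+1} between Dold spaces. Then the mapping telescope T X = (⨿_{n≥0} X_n × [0,1])/∼, where (x,1) ∈ X_n × [0,1] is identified with (f_n(x),0) ∈ X_{n+1} × [0,1], is a Dold space. -/
open unitInterval

universe u v w

/-- The generating relation of the mapping telescope of `f_n : X n → X (n+1)`:
`(x,1) ∈ X n × [0,1]` is identified with `(f n x, 0) ∈ X (n+1) × [0,1]`. -/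
inductive TelescopeRel (X : ℕ → Type*) (f : ∀ n, X n → X (n + 1)) :
    (Σ n, X n × unitInterval) → (Σ n, X n × unitInterval) → Prop
  | glue (n : ℕ) (x : X n) :
      TelescopeRel X f ⟨n, (x, 1)⟩ ⟨n + 1, (f n x, 0)⟩

/-- The mapping telescope of the sequence `X 0 → X 1 → X 2 → ⋯`. -/
def MappingTelescope (X : ℕ → Type*) (f : ∀ n, X n → X (n + 1)) :=
  Quot (TelescopeRel X f)

instance (X : ℕ → Type*) [∀ n, TopologicalSpace (X n)] (f : ∀ n, X n → X (n + 1)) :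
    TopologicalSpace (MappingTelescope X f) :=
  instTopologicalSpaceQuot

/-!
The telescope is covered by the open collars `openCollar f n`, made of `X n × [0,1)` and of
`X (n - 1) × (0,1]`, whose end `X (n - 1) × {1}` is glued to `X n × {0}`. Piecewise linear weights
in the interval coordinate make this a numerable cover, and sliding along the interval coordinate
deforms each collar, inside the telescope, into the copy `X n × {0}` of `X n`.

This reduces the theorem to a general fact: if a space `T` has a numerable open cover by sets
`O n` whose inclusions into `T` factor up to homotopy through Dold spaces `X n`, then `T` is Dold.
Pull the numerable cover of `X n` by ambiently contractible sets back to `O n`; multiplying its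
partition of unity by the weight of `O n` gives a numerable cover of `T`, and each of its members
contracts in `T` by first moving into `X n` and then following the contraction there.
-/

open Set Function Topology

section DominatedCover

variable {T : Type*} [TopologicalSpace T]

theorem IsNumerableCover.exists_mem {ι : Type*} {U : ι → Set T} (hU : IsNumerableCover U)
    (p : T) : ∃ i, p ∈ U i := by
  obtain ⟨φ, ⟨-, -, hsum⟩, -, hsub⟩ := hU
  obtain ⟨i, hi⟩ : ∃ i, φ i p ≠ 0 := by
    by_contra! h
    exact one_ne_zero ((hsum p).unique (by simp [h]))
  exact ⟨i, hsub i (subset_closure hi)⟩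

theorem IsNumerableCover.comp_equiv {ι ι' : Type*} {U : ι → Set T} (hU : IsNumerableCover U)
    (e : ι' ≃ ι) : IsNumerableCover (U ∘ e) := by
  obtain ⟨φ, ⟨hcont, hIcc, hsum⟩, hlf, hsub⟩ := hU
  exact ⟨φ ∘ e, ⟨fun i => hcont _, fun i => hIcc _, fun p => e.hasSum_iff.2 (hsum p)⟩,
    hlf.comp_injective e.injective, fun i => hsub _⟩

theorem HasSum.sigma_of_nonneg {κ : Type*} {ι : κ → Type*} {F : (Σ n, ι n) → ℝ} {g : κ → ℝ}
    {a : ℝ} (hF : ∀ j, 0 ≤ F j) (hg : HasSum g a)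
    (hfib : ∀ n, HasSum (fun i => F ⟨n, i⟩) (g n)) : HasSum F a :=
  hg.sigma_of_hasSum hfib <| (summable_sigma_of_nonneg hF).2
    ⟨fun n => (hfib n).summable, by simpa only [(hfib _).tsum_eq] using hg.summable⟩

theorem LocallyFinite.sigma {κ : Type*} {ι : κ → Type*} {A : ∀ n, ι n → Set T}
    (h : LocallyFinite fun n => ⋃ i, A n i) (hA : ∀ n, LocallyFinite (A n)) :
    LocallyFinite fun j : Σ n, ι n => A j.1 j.2 := by
  intro p
  obtain ⟨N, hN, hfin⟩ := h p
  choose M hM hMfin using fun n => hA n p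
  refine ⟨N ∩ ⋂ n ∈ hfin.toFinset, M n,
    Filter.inter_mem hN ((Finset.iInter_mem_sets _).2 fun n _ => hM n),
    (hfin.biUnion fun n _ => (hMfin n).image (Sigma.mk n)).subset ?_⟩
  rintro ⟨n, i⟩ ⟨q, hqA, hqN, hqM⟩
  have hn : ((⋃ i, A n i) ∩ N).Nonempty := ⟨q, mem_iUnion.2 ⟨i, hqA⟩, hqN⟩
  exact mem_biUnion hn ⟨i, ⟨q, hqA, mem_iInter₂.1 hqM n (hfin.mem_toFinset.2 hn)⟩, rfl⟩

theorem ContinuousMap.Homotopic.of_continuousOn_paths {Y Z : Type*} [TopologicalSpace Y]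
    [TopologicalSpace Z] {S : Set Y} {g₀ g₁ : C(S, Z)} (F : Y → C(I, Z)) (hF : ContinuousOn F S)
    (h₀ : ∀ p : S, F p 0 = g₀ p) (h₁ : ∀ p : S, F p 1 = g₁ p) : g₀.Homotopic g₁ :=
  ⟨{ toContinuousMap :=
        (ContinuousMap.uncurry ⟨S.domRestrict F, hF.domRestrict⟩).comp ⟨Prod.swap, continuous_swap⟩
     map_zero_left := h₀
     map_one_left := h₁ }⟩

variable {O : Set T} {Y : Type*} [TopologicalSpace Y]

theorem isClosed_inter_image_val {K : Set T} (hK : IsClosed K) (hKO : K ⊆ O) {D : Set O}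
    (hD : IsClosed D) : IsClosed (K ∩ (↑) '' D) := by
  obtain ⟨E, hE, rfl⟩ := isClosed_induced_iff.1 hD
  rw [Subtype.image_preimage_coe, ← inter_assoc, inter_eq_left.2 hKO]
  exact hK.inter hE

theorem LocallyFinite.inter_image_preimage {ι : Type*} {C : ι → Set Y} (hC : LocallyFinite C)
    (hO : IsOpen O) {K : Set T} (hK : IsClosed K) (hKO : K ⊆ O) (r : C(O, Y)) :
    LocallyFinite fun i => K ∩ (↑) '' (r ⁻¹' C i) := by
  intro p
  by_cases hp : p ∈ O
  · obtain ⟨N, hN, hfin⟩ := hC.preimage_continuous r.continuous ⟨p, hp⟩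
    refine ⟨(↑) '' N, hO.isOpenEmbedding_subtypeVal.isOpenMap.image_mem_nhds hN, hfin.subset ?_⟩
    rintro i ⟨_, ⟨-, q, hq, rfl⟩, q', hq', hqq'⟩
    obtain rfl := Subtype.ext hqq'
    exact ⟨q', hq, hq'⟩
  · refine ⟨Kᶜ, hK.isOpen_compl.mem_nhds fun h => hp (hKO h), finite_empty.subset ?_⟩
    rintro i ⟨q, ⟨hqK, -⟩, hq⟩
    exact hq hqK

open scoped Classical in
noncomputable def mulPullback (w : T → ℝ) (r : C(O, Y)) (φ : Y → ℝ) (p : T) : ℝ :=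
  w p * if h : p ∈ O then φ (r ⟨p, h⟩) else 0

variable {w : T → ℝ} (r : C(O, Y))

theorem continuous_mulPullback (hO : IsOpen O) (hw : Continuous w) (hwO : tsupport w ⊆ O)
    {φ : Y → ℝ} (hφ : Continuous φ) : Continuous (mulPullback w r φ) := by
  refine ContinuousOn.continuous_of_tsupport_subset ?_ hO (tsupport_mul_subset_left.trans hwO)
  refine hw.continuousOn.mul ?_
  rw [continuousOn_iff_continuous_domRestrict]
  convert hφ.comp r.continuous using 1
  ext ⟨p, hp⟩
  simp [hp]

theorem tsupport_mulPullback_subset (hwO : tsupport w ⊆ O) (φ : Y → ℝ) :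
    tsupport (mulPullback w r φ) ⊆ tsupport w ∩ (↑) '' (r ⁻¹' tsupport φ) := by
  refine closure_minimal (fun p hp => ⟨subset_closure (left_ne_zero_of_mul hp), ?_⟩)
    (isClosed_inter_image_val (isClosed_tsupport w) hwO
      ((isClosed_tsupport φ).preimage r.continuous))
  by_cases hpO : p ∈ O
  · exact ⟨⟨p, hpO⟩, subset_closure (by simp_all [mulPullback]), rfl⟩
  · simp [mulPullback, hpO] at hp

theorem mulPullback_mem_Icc (hw : ∀ p, w p ∈ Icc (0 : ℝ) 1) {φ : Y → ℝ}
    (hφ : ∀ y, φ y ∈ Icc (0 : ℝ) 1) (p : T) : mulPullback w r φ p ∈ Icc (0 : ℝ) 1 := by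
  unfold mulPullback
  split_ifs
  · exact ⟨mul_nonneg (hw p).1 (hφ _).1, mul_le_one₀ (hw p).2 (hφ _).1 (hφ _).2⟩
  · simp

theorem hasSum_mulPullback (hwO : support w ⊆ O) {ι : Type*} {φ : ι → Y → ℝ}
    (hφ : ∀ y, HasSum (fun i => φ i y) 1) (p : T) :
    HasSum (fun i => mulPullback w r (φ i) p) (w p) := by
  by_cases hp : p ∈ O
  · simpa [mulPullback, hp] using (hφ (r ⟨p, hp⟩)).mul_left (w p)
  · simp [mulPullback, notMem_support.1 fun h => hp (hwO h)]

theorem ambientlyContractibleTo_preimage {k : C(Y, T)}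
    (hrk : (⟨Subtype.val, continuous_subtype_val⟩ : C(O, T)).Homotopic (k.comp r))
    {U : Set Y} {y₀ : Y} (hU : AmbientlyContractibleTo U y₀) :
    AmbientlyContractibleTo {p | ∃ h : p ∈ O, r ⟨p, h⟩ ∈ U} (k y₀) :=
  let incl : C({p | ∃ h : p ∈ O, r ⟨p, h⟩ ∈ U}, O) :=
    ⟨fun v => ⟨v.1, v.2.1⟩, continuous_subtype_val.subtype_mk _⟩
  let rU : C({p | ∃ h : p ∈ O, r ⟨p, h⟩ ∈ U}, U) :=
    ⟨fun v => ⟨r (incl v), v.2.2⟩, (r.continuous.comp incl.continuous).subtype_mk _⟩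
  (hrk.comp (.refl incl)).trans ((ContinuousMap.Homotopic.refl k).comp (hU.comp (.refl rU)))

theorem IsDoldSpace.of_numerableCover_homotopic {T : Type u} [TopologicalSpace T] {κ : Type u}
    {X : κ → Type u} [∀ n, TopologicalSpace (X n)] {O : κ → Set T} (hO : ∀ n, IsOpen (O n))
    (hnum : IsNumerableCover O) (r : ∀ n, C(O n, X n)) (k : ∀ n, C(X n, T))
    (hrk : ∀ n, (⟨Subtype.val, continuous_subtype_val⟩ : C(O n, T)).Homotopic ((k n).comp (r n)))
    (hX : ∀ n, IsDoldSpace (X n)) : IsDoldSpace T := by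
  choose ι U _ hnumU hcontr using hX
  choose φ hφ hlfφ hφU using hnumU
  choose x₀ hx₀ using hcontr
  obtain ⟨w, ⟨hwc, hwI, hws⟩, hlfw, hwO⟩ := hnum
  set Φ : (Σ n, ι n) → T → ℝ := fun j => mulPullback (w j.1) (r j.1) (φ j.1 j.2)
  have hΦI : ∀ j p, Φ j p ∈ Icc (0 : ℝ) 1 :=
    fun j => mulPullback_mem_Icc _ (hwI _) ((hφ _).2.1 _)
  have hlf : LocallyFinite fun j : Σ n, ι n =>
      tsupport (w j.1) ∩ (↑) '' (r j.1 ⁻¹' tsupport (φ j.1 j.2)) :=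
    LocallyFinite.sigma (hlfw.subset fun n => iUnion_subset fun i => inter_subset_left)
      fun n => (hlfφ n).inter_image_preimage (hO n) (isClosed_tsupport _) (hwO n) (r n)
  have hV : IsNumerableCover fun j : Σ n, ι n =>
      {p | ∃ h : p ∈ O j.1, r j.1 ⟨p, h⟩ ∈ U j.1 j.2} := by
    refine ⟨Φ, ⟨fun j => continuous_mulPullback _ (hO _) (hwc _) (hwO _) ((hφ _).1 _), hΦI,
      fun p => HasSum.sigma_of_nonneg (F := fun j => Φ j p) (fun j => (hΦI j p).1) (hws p)
        fun n => hasSum_mulPullback (r n) (subset_closure.trans (hwO n)) (hφ n).2.2 p⟩,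
      hlf.subset fun j => tsupport_mulPullback_subset _ (hwO _) _, fun j => ?_⟩
    rintro p hp
    obtain ⟨-, q, hq, rfl⟩ := tsupport_mulPullback_subset _ (hwO _) _ hp
    exact ⟨q.2, hφU _ _ hq⟩
  exact ⟨_, _, hV.exists_mem, hV,
    fun j => ⟨_, ambientlyContractibleTo_preimage _ (hrk j.1) (hx₀ j.1 j.2)⟩⟩

end DominatedCover

namespace MappingTelescope

variable {X : ℕ → Type u} {f : ∀ n, X n → X (n + 1)}

variable (f) in
def mk (n : ℕ) (x : X n) (t : I) : MappingTelescope X f := Quot.mk _ ⟨n, (x, t)⟩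

theorem mk_one (n : ℕ) (x : X n) : mk f n x 1 = mk f (n + 1) (f n x) 0 :=
  Quot.sound (.glue n x)

@[elab_as_elim]
theorem ind {P : MappingTelescope X f → Prop} (h : ∀ n x t, P (mk f n x t))
    (p : MappingTelescope X f) : P p :=
  Quot.ind (fun a => h a.1 a.2.1 a.2.2) p

variable (f) in
def lift {β : Sort*} (F : ∀ n, X n → I → β) (hF : ∀ n x, F n x 1 = F (n + 1) (f n x) 0) :
    MappingTelescope X f → β :=
  Quot.lift (fun a => F a.1 a.2.1 a.2.2) fun _ _ h => by cases h; exact hF _ _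

@[simp]
theorem lift_mk {β : Sort*} (F : ∀ n, X n → I → β)
    (hF : ∀ n x, F n x 1 = F (n + 1) (f n x) 0) (n : ℕ) (x : X n) (t : I) :
    lift f F hF (mk f n x t) = F n x t :=
  rfl

variable (f) in
def openCollar (n : ℕ) : Set (MappingTelescope X f) :=
  {p | lift f (fun m _ t => (m = n ∧ t < 1) ∨ (m + 1 = n ∧ 0 < t)) (fun m _ => by simp) p}

variable (f) in
def closedCollar (n : ℕ) : Set (MappingTelescope X f) :=
  {p | lift f (fun m _ t => (m = n ∧ (t : ℝ) ≤ 2 / 3) ∨ (m + 1 = n ∧ 1 / 3 ≤ (t : ℝ)))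
    (fun m _ => by norm_num) p}

theorem mem_openCollar {n m : ℕ} {x : X m} {t : I} :
    mk f m x t ∈ openCollar f n ↔ (m = n ∧ t < 1) ∨ (m + 1 = n ∧ 0 < t) :=
  Iff.rfl

theorem mem_closedCollar {n m : ℕ} {x : X m} {t : I} :
    mk f m x t ∈ closedCollar f n ↔
      (m = n ∧ (t : ℝ) ≤ 2 / 3) ∨ (m + 1 = n ∧ 1 / 3 ≤ (t : ℝ)) :=
  Iff.rfl

theorem closedCollar_subset_openCollar (n : ℕ) : closedCollar f n ⊆ openCollar f n := by
  refine ind fun m x t ht => ?_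
  rcases mem_closedCollar.1 ht with ⟨rfl, ht⟩ | ⟨rfl, ht⟩
  · exact Or.inl ⟨rfl, show (t : ℝ) < 1 by linarith⟩
  · exact Or.inr ⟨rfl, show (0 : ℝ) < t by linarith⟩

theorem exists_mem_openCollar (p : MappingTelescope X f) : ∃ n, p ∈ openCollar f n := by
  induction p using ind with | h m x t => ?_
  rcases (unitInterval.le_one' (t := t)).lt_or_eq with ht | rfl
  · exact ⟨m, Or.inl ⟨rfl, ht⟩⟩
  · exact ⟨m + 1, mk_one m x ▸ Or.inl ⟨rfl, zero_lt_one⟩⟩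

theorem le_of_mk_mem_openCollar {n m : ℕ} {x : X m} {t : I}
    (h : mk f m x t ∈ openCollar f n) : m ≤ n := by
  rcases mem_openCollar.1 h with ⟨rfl, -⟩ | ⟨rfl, -⟩ <;> omega

theorem nonempty_of_mem_openCollar {n : ℕ} {p : MappingTelescope X f}
    (hp : p ∈ openCollar f n) : Nonempty (X n) := by
  induction p using ind with | h m x t => ?_
  rcases mem_openCollar.1 hp with ⟨rfl, -⟩ | ⟨rfl, -⟩
  exacts [⟨x⟩, ⟨f m x⟩]

def cutoff (t : ℝ) : ℝ := max 0 (min 1 (2 - 3 * t))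

@[fun_prop]
theorem continuous_cutoff : Continuous cutoff := by unfold cutoff; fun_prop

theorem cutoff_mem_Icc (t : ℝ) : cutoff t ∈ Icc (0 : ℝ) 1 :=
  ⟨le_max_left _ _, max_le zero_le_one (min_le_left _ _)⟩

theorem cutoff_of_le {t : ℝ} (ht : t ≤ 1 / 3) : cutoff t = 1 := by
  rw [cutoff, min_eq_left (by linarith), max_eq_right zero_le_one]

theorem cutoff_of_ge {t : ℝ} (ht : 2 / 3 ≤ t) : cutoff t = 0 := by
  rw [cutoff, max_eq_left (min_le_of_right_le (by linarith))]

variable (f) in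
noncomputable def collarWeight (n : ℕ) : MappingTelescope X f → ℝ :=
  lift f (fun m _ t => if m = n then cutoff t else if m + 1 = n then 1 - cutoff t else 0)
    fun m _ => by
      simp only [Icc.coe_one, Icc.coe_zero, cutoff_of_ge (by norm_num : (2 / 3 : ℝ) ≤ 1),
        cutoff_of_le (by norm_num : (0 : ℝ) ≤ 1 / 3)]
      split_ifs <;> first | (exfalso; omega) | norm_num

theorem collarWeight_mem_Icc (n : ℕ) (p : MappingTelescope X f) :
    collarWeight f n p ∈ Icc (0 : ℝ) 1 := by
  induction p using ind with | h m x t => ?_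
  have := cutoff_mem_Icc t
  simp only [collarWeight, lift_mk]
  split_ifs <;> constructor <;> linarith [this.1, this.2]

theorem hasSum_collarWeight (p : MappingTelescope X f) :
    HasSum (fun n => collarWeight f n p) 1 := by
  induction p using ind with | h m x t => ?_
  convert (hasSum_ite_eq m (cutoff t)).add (hasSum_ite_eq (m + 1) (1 - cutoff t)) using 1
  · ext n
    simp only [collarWeight, lift_mk]
    split_ifs <;> first | (exfalso; omega) | ring
  · ring

theorem support_collarWeight_subset (n : ℕ) :
    support (collarWeight f n) ⊆ closedCollar f n := by
  refine ind fun m x t ht => mem_closedCollar.2 ?_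
  simp only [mem_support, collarWeight, lift_mk] at ht
  split_ifs at ht with h₁ h₂
  · exact Or.inl ⟨h₁, not_lt.1 fun h => ht (cutoff_of_ge h.le)⟩
  · exact Or.inr ⟨h₂, not_lt.1 fun h => ht (by rw [cutoff_of_le h.le, sub_self])⟩
  · exact absurd rfl ht

variable (f) in
/-- Off `openCollar f n` the value `Classical.arbitrary _` is junk. -/
noncomputable def collarProj (n : ℕ) [Nonempty (X n)] : MappingTelescope X f → X n :=
  lift f (fun m x t => if h : m = n ∧ t < 1 then h.1 ▸ x
    else if h : m + 1 = n ∧ 0 < t then h.1 ▸ f m x else Classical.arbitrary _) fun m x => by simp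

variable [∀ n, TopologicalSpace (X n)]

@[fun_prop]
theorem continuous_mk {Y : Type*} [TopologicalSpace Y] {n : ℕ} {g : Y → X n} {h : Y → I}
    (hg : Continuous g) (hh : Continuous h) : Continuous fun y => mk f n (g y) (h y) :=
  continuous_quot_mk.comp ((@continuous_sigmaMk ℕ (fun m => X m × I) _ n).comp (hg.prodMk hh))

theorem isOpen_iff {S : Set (MappingTelescope X f)} :
    IsOpen S ↔ ∀ n, IsOpen {p : X n × I | mk f n p.1 p.2 ∈ S} :=
  isQuotientMap_quot_mk.isOpen_preimage.symm.trans isOpen_sigma_iff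

theorem isClosed_iff {S : Set (MappingTelescope X f)} :
    IsClosed S ↔ ∀ n, IsClosed {p : X n × I | mk f n p.1 p.2 ∈ S} :=
  isQuotientMap_quot_mk.isClosed_preimage.symm.trans isClosed_sigma_iff

theorem continuousOn_of_forall {Z : Type*} [TopologicalSpace Z]
    {g : MappingTelescope X f → Z} {S : Set (MappingTelescope X f)} (hS : IsOpen S)
    (hg : ∀ n, ContinuousOn (fun p : X n × I => g (mk f n p.1 p.2)) {p | mk f n p.1 p.2 ∈ S}) :
    ContinuousOn g S :=
  (continuousOn_open_iff hS).2 fun _ hW =>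
    isOpen_iff.2 fun n => (hg n).isOpen_inter_preimage (isOpen_iff.1 hS n) hW

theorem continuous_of_forall {Z : Type*} [TopologicalSpace Z] {g : MappingTelescope X f → Z}
    (hg : ∀ n, Continuous fun p : X n × I => g (mk f n p.1 p.2)) : Continuous g :=
  continuousOn_univ.1 <| continuousOn_of_forall isOpen_univ fun n => (hg n).continuousOn

variable (f) in
def incl (n : ℕ) : C(X n, MappingTelescope X f) :=
  ⟨fun x => mk f n x 0, by fun_prop⟩

theorem isOpen_openCollar (n : ℕ) : IsOpen (openCollar f n) :=
  isOpen_iff.2 fun m =>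
    show IsOpen ({p : X m × I | m = n ∧ p.2 < 1} ∪ {p | m + 1 = n ∧ 0 < p.2}) from
      (isOpen_const.and (isOpen_lt continuous_snd continuous_const)).union
        (isOpen_const.and (isOpen_lt continuous_const continuous_snd))

theorem isClosed_closedCollar (n : ℕ) : IsClosed (closedCollar f n) :=
  isClosed_iff.2 fun m =>
    show IsClosed ({p : X m × I | m = n ∧ (p.2 : ℝ) ≤ 2 / 3} ∪
        {p | m + 1 = n ∧ 1 / 3 ≤ (p.2 : ℝ)}) from
      (isClosed_const.inter
          (isClosed_le (continuous_subtype_val.comp continuous_snd) continuous_const)).union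
        (isClosed_const.inter
          (isClosed_le continuous_const (continuous_subtype_val.comp continuous_snd)))

theorem locallyFinite_closedCollar : LocallyFinite (closedCollar f) := by
  intro p
  obtain ⟨m, hm⟩ := exists_mem_openCollar p
  refine ⟨openCollar f m, (isOpen_openCollar m).mem_nhds hm,
    (finite_le_nat (m + 1)).subset ?_⟩
  rintro n ⟨q, hqK, hqO⟩
  induction q using ind with | h k x t => ?_
  have := le_of_mk_mem_openCollar hqO
  rcases mem_closedCollar.1 hqK with ⟨rfl, -⟩ | ⟨rfl, -⟩ <;> show _ ≤ m + 1 <;> omega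

theorem continuous_collarWeight (n : ℕ) : Continuous (collarWeight f n) :=
  continuous_of_forall fun m => by
    simp only [collarWeight, lift_mk]
    split_ifs <;> fun_prop

theorem isNumerableCover_openCollar : IsNumerableCover (openCollar f) :=
  have hK n : tsupport (collarWeight f n) ⊆ closedCollar f n :=
    closure_minimal (support_collarWeight_subset n) (isClosed_closedCollar n)
  ⟨collarWeight f, ⟨continuous_collarWeight, collarWeight_mem_Icc, hasSum_collarWeight⟩,
    locallyFinite_closedCollar.subset hK, fun n => (hK n).trans (closedCollar_subset_openCollar n)⟩

theorem continuousOn_openCollar {Z : Type*} [TopologicalSpace Z] {g : MappingTelescope X f → Z}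
    {n : ℕ} (hn : ContinuousOn (fun p : X n × I => g (mk f n p.1 p.2)) {p | p.2 < 1})
    (hpred : ∀ m, m + 1 = n →
      ContinuousOn (fun p : X m × I => g (mk f m p.1 p.2)) {p | 0 < p.2}) :
    ContinuousOn g (openCollar f n) := by
  refine continuousOn_of_forall (isOpen_openCollar n) fun m => ?_
  rcases eq_or_ne m n with rfl | h₁
  · exact hn.mono fun p (hp : mk f m p.1 p.2 ∈ openCollar f m) =>
      (mem_openCollar.1 hp).elim And.right fun h => absurd h.1 (by omega)
  by_cases h₂ : m + 1 = n
  · exact (hpred m h₂).mono fun p (hp : mk f m p.1 p.2 ∈ openCollar f n) =>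
      (mem_openCollar.1 hp).elim (fun h => absurd h.1 h₁) And.right
  · exact fun p (hp : mk f m p.1 p.2 ∈ openCollar f n) =>
      (mem_openCollar.1 hp).elim (fun h => absurd h.1 h₁) fun h => absurd h.1 h₂

theorem continuousOn_collarProj (hf : ∀ n, Continuous (f n)) (n : ℕ) [Nonempty (X n)] :
    ContinuousOn (collarProj f n) (openCollar f n) := by
  refine continuousOn_openCollar
    (continuous_fst.continuousOn.congr fun p (hp : p.2 < 1) => by simp [collarProj, hp])
    fun m hm => ?_
  subst hm
  exact ((hf m).comp continuous_fst).continuousOn.congr fun p (hp : 0 < p.2) => by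
    simp [collarProj, hp]

variable (f) in
/-- Slides `X n × [0,1)` down to `X n × {0}`, and `X (n - 1) × (0,1]` up to its end
`X (n - 1) × {1}`, which is glued into `X n × {0}`. -/
noncomputable def collarSlide (n : ℕ) : MappingTelescope X f → C(I, MappingTelescope X f) :=
  lift f (fun m x t =>
    if m = n ∧ t < 1 then ⟨fun s => mk f m x (min (σ s) t), by fun_prop⟩
    else if m + 1 = n ∧ 0 < t then ⟨fun s => mk f m x (max s t), by fun_prop⟩
    else .const I (mk f m x t))
    fun m x => by
      simp only [lt_irrefl, and_false, zero_lt_one, and_true, if_false]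
      split_ifs <;> ext s <;> simp [mk_one, max_eq_right unitInterval.le_one']

theorem continuousOn_collarSlide (n : ℕ) : ContinuousOn (collarSlide f n) (openCollar f n) := by
  refine continuousOn_openCollar
    ((ContinuousMap.continuous_of_continuous_uncurry
      (fun p : X n × I => ⟨fun s => mk f n p.1 (min (σ s) p.2), by fun_prop⟩)
      (show Continuous fun q : (X n × I) × I => mk f n q.1.1 (min (σ q.2) q.1.2) by
        fun_prop)).continuousOn.congr
      fun p (hp : p.2 < 1) => by simp [collarSlide, hp])
    fun m hm => ?_
  subst hm
  exact (ContinuousMap.continuous_of_continuous_uncurry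
    (fun p : X m × I => ⟨fun s => mk f m p.1 (max s p.2), by fun_prop⟩)
    (show Continuous fun q : (X m × I) × I => mk f m q.1.1 (max q.2 q.1.2) by
      fun_prop)).continuousOn.congr
    fun p (hp : 0 < p.2) => by simp [collarSlide, hp]

theorem collarSlide_zero {n : ℕ} {p : MappingTelescope X f} (hp : p ∈ openCollar f n) :
    collarSlide f n p 0 = p := by
  induction p using ind with | h m x t => ?_
  rcases mem_openCollar.1 hp with ⟨rfl, ht⟩ | ⟨rfl, ht⟩ <;>
    simp [collarSlide, ht, min_eq_right unitInterval.le_one']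

theorem collarSlide_one {n : ℕ} [Nonempty (X n)] {p : MappingTelescope X f}
    (hp : p ∈ openCollar f n) : collarSlide f n p 1 = incl f n (collarProj f n p) := by
  induction p using ind with | h m x t => ?_
  rcases mem_openCollar.1 hp with ⟨rfl, ht⟩ | ⟨rfl, ht⟩
  · simp [collarSlide, collarProj, incl, ht]
  · simp [collarSlide, collarProj, incl, ht, max_eq_left unitInterval.le_one', mk_one]

variable (f) in
/-- The `Nonempty (X n)` instance is taken from the point itself; being a proposition, it does
not depend on the point. -/
noncomputable def collarRetraction (hf : ∀ n, Continuous (f n)) (n : ℕ) :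
    C(openCollar f n, X n) where
  toFun p := haveI := nonempty_of_mem_openCollar p.2; collarProj f n p
  continuous_toFun := continuous_iff_continuousAt.2 fun p => by
    have := nonempty_of_mem_openCollar p.2
    exact (continuousOn_collarProj hf n).domRestrict.continuousAt

theorem homotopic_collarRetraction (hf : ∀ n, Continuous (f n)) (n : ℕ) :
    (⟨Subtype.val, continuous_subtype_val⟩ : C(openCollar f n, MappingTelescope X f)).Homotopic
      ((incl f n).comp (collarRetraction f hf n)) :=
  .of_continuousOn_paths (collarSlide f n) (continuousOn_collarSlide n)
    (fun p => collarSlide_zero p.2) fun p => by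
      have := nonempty_of_mem_openCollar p.2
      exact collarSlide_one p.2

end MappingTelescope

/-- the mapping telescope of a sequence of maps of Dold spaces is Dold. -/
theorem stmt12 (X : ℕ → Type u) [∀ n, TopologicalSpace (X n)]
    (f : ∀ n, X n → X (n + 1)) (hf : ∀ n, Continuous (f n))
    (hX : ∀ n, IsDoldSpace (X n)) :
    IsDoldSpace (MappingTelescope X f) :=
  IsDoldSpace.of_numerableCover_homotopic (κ := ULift ℕ)
    (fun n => MappingTelescope.isOpen_openCollar n.down)
    ((MappingTelescope.isNumerableCover_openCollar (f := f)).comp_equiv Equiv.ulift)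
    (fun n => MappingTelescope.collarRetraction f hf n.down)
    (fun n => MappingTelescope.incl f n.down)
    (fun n => MappingTelescope.homotopic_collarRetraction hf n.down) fun n => hX n.down
end
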